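/- Let p1 be a probability measure on R^d with compact support (or suitable moment/integrability conditions), and define for fixed t in [0,1) and ε > 0 the mollified kernel k(y,x) = exp(-||t y - x||^2 / (2(1-t)^2 + ε)) and the field v(x) = E_{x1~p1}[ (x1 - x) k(x1,x) ] / E_{x1~p1}[ k(x1,x) ]. Then the divergence of u(x) = v(x)/(1-t) satisfies ∇·u(x) = (1/(1-t)) [ (2t/(2(1-t)^2+ε)) ( E_w[||X_1||^2] - ||E_w[X_1]||^2 ) - d ], where E_w denotes the kernel-weighted expectation E_w[f(X_1)] = E_{x1~p1}[f(x1) k(x1,x)] / E_{x1~p1}[k(x1,x)]. -/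

import Mathlib

open MeasureTheory Real

set_option maxHeartbeats 2000000
set_option synthInstance.maxHeartbeats 400000

section Aux

variable {d : ℕ}

lemma kernel_hasFDerivAt' (t c : ℝ) (y x : EuclideanSpace ℝ (Fin d)) :
    HasFDerivAt (fun x : EuclideanSpace ℝ (Fin d) => exp (-‖t • y - x‖ ^ 2 / c))
      ((2 / c * exp (-‖t • y - x‖ ^ 2 / c)) • (innerSL ℝ (t • y - x))) x := by
  have hg : HasFDerivAt (fun x : EuclideanSpace ℝ (Fin d) => t • y - x)
      ((0 : EuclideanSpace ℝ (Fin d) →L[ℝ] EuclideanSpace ℝ (Fin d))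
        - ContinuousLinearMap.id ℝ (EuclideanSpace ℝ (Fin d))) x :=
    (hasFDerivAt_const _ _).sub (hasFDerivAt_id x)
  have hinner := hg.inner ℝ hg
  have hf : HasFDerivAt (fun x : EuclideanSpace ℝ (Fin d) => -‖t • y - x‖ ^ 2 / c)
      ((2 / c) • (innerSL ℝ (t • y - x))) x := by
    have heq : (fun x : EuclideanSpace ℝ (Fin d) => -‖t • y - x‖ ^ 2 / c)
        = fun x : EuclideanSpace ℝ (Fin d) =>
            (-(1/c)) * (inner ℝ (t • y - x) (t • y - x) : ℝ) := by
      funext z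
      rw [real_inner_self_eq_norm_sq]
      ring
    rw [heq]
    have h3 := hinner.const_mul (-(1/c))
    refine h3.congr_fderiv ?_
    ext v
    simp only [ContinuousLinearMap.smul_apply, ContinuousLinearMap.coe_comp',
      Function.comp_apply, ContinuousLinearMap.prod_apply, ContinuousLinearMap.coe_sub',
      Pi.sub_apply, ContinuousLinearMap.zero_apply, ContinuousLinearMap.id_apply,
      fderivInnerCLM_apply, innerSL_apply_apply, zero_sub,
      inner_neg_right, inner_neg_left, smul_eq_mul, ContinuousLinearMap.neg_apply]
    rw [real_inner_comm v (t • y - x)]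
    ring
  have h2 := hf.exp
  refine h2.congr_fderiv ?_
  rw [smul_smul]
  ring_nf

lemma integrable_of_cont_bound {V : Type*} [NormedAddCommGroup V]
    {μ : Measure (EuclideanSpace ℝ (Fin d))} [IsFiniteMeasure μ]
    {f : EuclideanSpace ℝ (Fin d) → V} (hf : Continuous f) {M : ℝ}
    (hM : ∀ᵐ y ∂μ, ‖f y‖ ≤ M) : Integrable f μ :=
  Integrable.mono' (integrable_const M) hf.aestronglyMeasurable hM

lemma euclid_norm_sq_eq_sum (w : EuclideanSpace ℝ (Fin d)) :
    ‖w‖ ^ 2 = ∑ i : Fin d, (w i) ^ 2 := by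
  rw [EuclideanSpace.norm_eq, Real.sq_sqrt (by positivity)]
  simp [Real.norm_eq_abs, sq_abs]

end Aux

/-- closed-form divergence of the mollified attraction field.  With
`k(y,x) = exp(-‖t y - x‖²/(2(1-t)²+ε))`, `v(x) = E_{x₁~p₁}[(x₁-x)k(x₁,x)]/E_{x₁~p₁}[k(x₁,x)]`
and `u = v/(1-t)`, for a compactly supported `p₁` the divergence of `u` is
`∇·u(x) = (1/(1-t)) [ (2t/(2(1-t)²+ε)) (E_w[‖X₁‖²] - ‖E_w[X₁]‖²) - d ]`,
where `E_w` is the kernel-weighted expectation at `x`. -/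
theorem divergence_attraction_field (d : ℕ) (t ε : ℝ)
    (ht0 : 0 ≤ t) (ht1 : t < 1) (hε : 0 < ε)
    (p₁ : Measure (EuclideanSpace ℝ (Fin d))) [IsProbabilityMeasure p₁]
    -- compact support of `p₁`
    (hcpt : ∃ K : Set (EuclideanSpace ℝ (Fin d)), IsCompact K ∧ p₁ Kᶜ = 0)
    (k : EuclideanSpace ℝ (Fin d) → EuclideanSpace ℝ (Fin d) → ℝ)
    (hk : k = fun y x => exp (-‖t • y - x‖ ^ 2 / (2 * (1 - t) ^ 2 + ε)))
    (hpos : ∀ x, 0 < ∫ y, k y x ∂p₁)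
    (u : EuclideanSpace ℝ (Fin d) → EuclideanSpace ℝ (Fin d))
    (hu : u = fun x => (1 - t)⁻¹ •
      ((∫ y, k y x ∂p₁)⁻¹ • (∫ y, k y x • (y - x) ∂p₁))) :
    ∀ x, (∑ i : Fin d, fderiv ℝ u x (EuclideanSpace.single i 1) i) =
      (1 - t)⁻¹ * ((2 * t / (2 * (1 - t) ^ 2 + ε)) *
        ((∫ y, k y x ∂p₁)⁻¹ * (∫ y, ‖y‖ ^ 2 * k y x ∂p₁) -
          ‖(∫ y, k y x ∂p₁)⁻¹ • (∫ y, k y x • y ∂p₁)‖ ^ 2) - d) := by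
  intro x
  set c : ℝ := 2 * (1 - t) ^ 2 + ε with hc_def
  have hc : 0 < c := by positivity
  obtain ⟨K, hKcpt, hK0⟩ := hcpt
  have haeK : ∀ᵐ y ∂p₁, y ∈ K := by
    rw [ae_iff]; exact hK0
  obtain ⟨R₀, hR₀⟩ := hKcpt.isBounded.exists_norm_le
  set R : ℝ := max R₀ 0 with hR_def
  have hR0 : 0 ≤ R := le_max_right _ _
  have hRK : ∀ y ∈ K, ‖y‖ ≤ R := fun y hy => le_trans (hR₀ y hy) (le_max_left _ _)
  -- basic kernel facts
  have hkpos : ∀ y z : EuclideanSpace ℝ (Fin d), 0 < k y z := by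
    intro y z; rw [hk]; exact exp_pos _
  have hkle : ∀ y z : EuclideanSpace ℝ (Fin d), k y z ≤ 1 := by
    intro y z; rw [hk]
    calc exp (-‖t • y - z‖ ^ 2 / c) ≤ exp 0 := by
          apply exp_le_exp.mpr
          apply div_nonpos_of_nonpos_of_nonneg (neg_nonpos.mpr (by positivity)) hc.le
      _ = 1 := exp_zero
  have hkcont : ∀ z : EuclideanSpace ℝ (Fin d), Continuous (fun y => k y z) := by
    intro z; rw [hk]
    exact Real.continuous_exp.comp
      ((((continuous_id.const_smul t).sub continuous_const).norm.pow 2).neg.div_const c)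
  -- the pointwise derivative of the kernel in its second argument
  set D : EuclideanSpace ℝ (Fin d) → EuclideanSpace ℝ (Fin d) → (EuclideanSpace ℝ (Fin d) →L[ℝ] ℝ) := fun y z => (2 / c * k y z) • innerSL ℝ (t • y - z)
    with hD_def
  have hDder : ∀ (y z : EuclideanSpace ℝ (Fin d)), HasFDerivAt (fun z => k y z) (D y z) z := by
    intro y z
    simp only [hD_def, hk]
    exact kernel_hasFDerivAt' t c y z
  have hDnorm : ∀ y z : EuclideanSpace ℝ (Fin d), ‖D y z‖ ≤ 2 / c * ‖t • y - z‖ := by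
    intro y z
    rw [hD_def]
    simp only
    rw [norm_smul (α := ℝ) (β := EuclideanSpace ℝ (Fin d) →L[ℝ] ℝ), innerSL_apply_norm, Real.norm_eq_abs,
      abs_of_nonneg (mul_nonneg (by positivity) (hkpos y z).le)]
    apply mul_le_mul_of_nonneg_right _ (norm_nonneg _)
    have h1 := hkle y z
    have h2 : (0:ℝ) < 2 / c := by positivity
    nlinarith [(hkpos y z).le]
  have hDcont : ∀ z : EuclideanSpace ℝ (Fin d), Continuous (fun y => D y z) := by
    intro z
    simp only [hD_def]
    apply Continuous.fun_smul
    · exact (continuous_const.mul (hkcont z))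
    · exact (innerSL ℝ).continuous.comp ((continuous_id.const_smul t).sub continuous_const)
  -- bounds on kernel derivative over the unit ball around x, for y in K
  set B1 : ℝ := 2 / c * (t * R + (‖x‖ + 1)) with hB1_def
  have hB1 : ∀ y ∈ K, ∀ z ∈ Metric.ball x 1, ‖D y z‖ ≤ B1 := by
    intro y hy z hz
    refine le_trans (hDnorm y z) ?_
    rw [hB1_def]
    have h1 : ‖t • y - z‖ ≤ t * R + (‖x‖ + 1) := by
      calc ‖t • y - z‖ ≤ ‖t • y‖ + ‖z‖ := norm_sub_le _ _
        _ ≤ t * R + (‖x‖ + 1) := by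
            have h2 : ‖t • y‖ = t * ‖y‖ := by
              rw [norm_smul, Real.norm_eq_abs, abs_of_nonneg ht0]
            have h3 : ‖z‖ ≤ ‖x‖ + 1 := by
              have := mem_ball_iff_norm.mp hz
              calc ‖z‖ ≤ ‖x‖ + ‖z - x‖ := by
                    simpa using norm_add_le x (z - x)
                _ ≤ ‖x‖ + 1 := by linarith
            have h4 : t * ‖y‖ ≤ t * R := mul_le_mul_of_nonneg_left (hRK y hy) ht0
            rw [h2]; linarith
    have h5 : (0:ℝ) ≤ 2 / c := by positivity
    exact mul_le_mul_of_nonneg_left h1 h5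
  have hball : x ∈ Metric.ball x 1 := Metric.mem_ball_self one_pos
  -- coordinate facts
  have hcoord : ∀ i : Fin d, Continuous fun y : EuclideanSpace ℝ (Fin d) => y i :=
    fun i => (EuclideanSpace.proj (𝕜 := ℝ) i).continuous
  have habs : ∀ (w : EuclideanSpace ℝ (Fin d)) (i : Fin d), |w i| ≤ ‖w‖ := by
    intro w i
    have h := abs_real_inner_le_norm (EuclideanSpace.single i (1:ℝ)) w
    simpa [EuclideanSpace.inner_single_left, EuclideanSpace.norm_single] using h
  -- integrability facts
  have hknorm : ∀ y z : EuclideanSpace ℝ (Fin d), ‖k y z‖ ≤ 1 := fun y z => by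
    rw [Real.norm_eq_abs, abs_of_nonneg (hkpos y z).le]; exact hkle y z
  have hIk : ∀ z, Integrable (fun y => k y z) p₁ := fun z =>
    integrable_of_cont_bound (hkcont z) (Filter.Eventually.of_forall fun y => hknorm y z)
  have hIky : Integrable (fun y => k y x • y) p₁ := by
    refine integrable_of_cont_bound ((hkcont x).smul continuous_id) (M := R) ?_
    filter_upwards [haeK] with y hy
    rw [norm_smul]
    calc ‖k y x‖ * ‖y‖ ≤ 1 * R :=
          mul_le_mul (hknorm y x) (hRK y hy) (norm_nonneg _) one_pos.le
      _ = R := one_mul R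
  have hIkyi : ∀ i : Fin d, Integrable (fun y => k y x * y i) p₁ := by
    intro i
    refine integrable_of_cont_bound ((hkcont x).mul (hcoord i)) (M := R) ?_
    filter_upwards [haeK] with y hy
    rw [Real.norm_eq_abs, abs_mul]
    calc |k y x| * |y i| ≤ 1 * R := by
          apply mul_le_mul (hknorm y x) ((habs y i).trans (hRK y hy)) (abs_nonneg _) one_pos.le
      _ = R := one_mul R
  have hIkyi2 : ∀ i : Fin d, Integrable (fun y => k y x * (y i) ^ 2) p₁ := by
    intro i
    refine integrable_of_cont_bound ((hkcont x).mul ((hcoord i).pow 2)) (M := R ^ 2) ?_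
    filter_upwards [haeK] with y hy
    rw [Real.norm_eq_abs, abs_mul]
    have h1 : |(y i) ^ 2| ≤ R ^ 2 := by
      rw [abs_of_nonneg (sq_nonneg _), ← sq_abs]
      have := (habs y i).trans (hRK y hy)
      nlinarith [abs_nonneg (y i)]
    calc |k y x| * |(y i) ^ 2| ≤ 1 * R ^ 2 :=
          mul_le_mul (hknorm y x) h1 (abs_nonneg _) one_pos.le
      _ = R ^ 2 := one_mul _
  have hIG : Integrable (fun y => k y x • (y - x)) p₁ := by
    refine integrable_of_cont_bound ((hkcont x).smul (continuous_id.sub continuous_const))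
      (M := R + ‖x‖) ?_
    filter_upwards [haeK] with y hy
    rw [norm_smul]
    calc ‖k y x‖ * ‖y - x‖ ≤ 1 * (R + ‖x‖) := by
          apply mul_le_mul (hknorm y x) ?_ (norm_nonneg _) one_pos.le
          exact (norm_sub_le y x).trans (by linarith [hRK y hy])
      _ = R + ‖x‖ := one_mul _
  have hID : Integrable (fun y => D y x) p₁ := by
    refine integrable_of_cont_bound (hDcont x) (M := B1) ?_
    filter_upwards [haeK] with y hy
    exact hB1 y hy x hball
  -- the derivative of the vector-valued integrand
  set Φ' : EuclideanSpace ℝ (Fin d) → EuclideanSpace ℝ (Fin d) →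
      (EuclideanSpace ℝ (Fin d) →L[ℝ] EuclideanSpace ℝ (Fin d)) := fun z y =>
    k y z • ((0 : EuclideanSpace ℝ (Fin d) →L[ℝ] EuclideanSpace ℝ (Fin d))
      - ContinuousLinearMap.id ℝ (EuclideanSpace ℝ (Fin d)))
      + (D y z).smulRight (y - z) with hΦ'_def
  have hΦ'der : ∀ (y z : EuclideanSpace ℝ (Fin d)),
      HasFDerivAt (fun z => k y z • (y - z)) (Φ' z y) z := by
    intro y z
    have h1 : HasFDerivAt (fun z : EuclideanSpace ℝ (Fin d) => y - z)
        ((0 : EuclideanSpace ℝ (Fin d) →L[ℝ] EuclideanSpace ℝ (Fin d))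
          - ContinuousLinearMap.id ℝ (EuclideanSpace ℝ (Fin d))) z :=
      (hasFDerivAt_const _ _).sub (hasFDerivAt_id z)
    exact (hDder y z).smul h1
  set B2 : ℝ := 1 + B1 * (R + (‖x‖ + 1)) with hB2_def
  have hΦ'norm : ∀ y ∈ K, ∀ z ∈ Metric.ball x 1, ‖Φ' z y‖ ≤ B2 := by
    intro y hy z hz
    rw [hΦ'_def]
    simp only
    refine (norm_add_le _ _).trans ?_
    have h1 : ‖k y z • ((0 : EuclideanSpace ℝ (Fin d) →L[ℝ] EuclideanSpace ℝ (Fin d))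
        - ContinuousLinearMap.id ℝ (EuclideanSpace ℝ (Fin d)))‖ ≤ 1 := by
      rw [norm_smul (α := ℝ)
        (β := EuclideanSpace ℝ (Fin d) →L[ℝ] EuclideanSpace ℝ (Fin d))]
      calc ‖k y z‖ * ‖(0 : EuclideanSpace ℝ (Fin d) →L[ℝ] EuclideanSpace ℝ (Fin d))
            - ContinuousLinearMap.id ℝ (EuclideanSpace ℝ (Fin d))‖ ≤ 1 * 1 := by
            apply mul_le_mul (hknorm y z) ?_ (norm_nonneg _) one_pos.le
            rw [zero_sub, norm_neg]
            exact ContinuousLinearMap.norm_id_le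
        _ = 1 := one_mul 1
    have h2 : ‖(D y z).smulRight (y - z)‖ ≤ B1 * (R + (‖x‖ + 1)) := by
      rw [ContinuousLinearMap.norm_smulRight_apply]
      apply mul_le_mul (hB1 y hy z hz) ?_ (norm_nonneg _)
        (le_trans (norm_nonneg _) (hB1 y hy z hz))
      have hz' : ‖z‖ ≤ ‖x‖ + 1 := by
        have := mem_ball_iff_norm.mp hz
        calc ‖z‖ ≤ ‖x‖ + ‖z - x‖ := by simpa using norm_add_le x (z - x)
          _ ≤ ‖x‖ + 1 := by linarith
      exact (norm_sub_le y z).trans (by linarith [hRK y hy])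
    rw [hB2_def]; linarith
  have hΦ'cont : Continuous (fun y => Φ' x y) := by
    rw [hΦ'_def]
    apply Continuous.add
    · exact (hkcont x).smul continuous_const
    · have c1 : Continuous (fun y : EuclideanSpace ℝ (Fin d) =>
          (ContinuousLinearMap.smulRightL ℝ (EuclideanSpace ℝ (Fin d))
            (EuclideanSpace ℝ (Fin d)) (D y x)) (y - x)) :=
        ((ContinuousLinearMap.smulRightL ℝ _ _).continuous.comp (hDcont x)).clm_apply
          (continuous_id.sub continuous_const)
      exact c1
  have hIΦ' : Integrable (fun y => Φ' x y) p₁ := by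
    refine integrable_of_cont_bound hΦ'cont (M := B2) ?_
    filter_upwards [haeK] with y hy
    exact hΦ'norm y hy x hball
  -- differentiation under the integral sign
  have hFder : HasFDerivAt (fun z => ∫ y, k y z ∂p₁) (∫ y, D y x ∂p₁) x := by
    apply hasFDerivAt_integral_of_dominated_of_fderiv_le (𝕜 := ℝ)
      (F := fun z y => k y z) (F' := fun z y => D y z) (bound := fun _ => B1) (Metric.ball_mem_nhds x one_pos)
    · exact Filter.Eventually.of_forall fun z => (hkcont z).aestronglyMeasurable
    · exact hIk x
    · exact (hDcont x).aestronglyMeasurable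
    · filter_upwards [haeK] with y hy
      exact fun z hz => hB1 y hy z hz
    · exact integrable_const _
    · filter_upwards [haeK] with y _
      exact fun z _ => hDder y z
  have hGder : HasFDerivAt (fun z => ∫ y, k y z • (y - z) ∂p₁) (∫ y, Φ' x y ∂p₁) x := by
    apply hasFDerivAt_integral_of_dominated_of_fderiv_le (𝕜 := ℝ)
      (F := fun z y => k y z • (y - z)) (F' := fun z y => Φ' z y)
      (bound := fun _ => B2) (Metric.ball_mem_nhds x one_pos)
    · exact Filter.Eventually.of_forall fun z =>
        ((hkcont z).smul (continuous_id.sub continuous_const)).aestronglyMeasurable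
    · exact hIG
    · exact hΦ'cont.aestronglyMeasurable
    · filter_upwards [haeK] with y hy
      exact fun z hz => hΦ'norm y hy z hz
    · exact integrable_const _
    · filter_upwards [haeK] with y _
      exact fun z _ => hΦ'der y z
  -- derivative of the full field
  set Fv : ℝ := ∫ y, k y x ∂p₁ with hFv_def
  have hFvpos : 0 < Fv := hpos x
  have hFvne : Fv ≠ 0 := ne_of_gt hFvpos
  set F' : EuclideanSpace ℝ (Fin d) →L[ℝ] ℝ := ∫ y, D y x ∂p₁ with hF'_def
  set G' : EuclideanSpace ℝ (Fin d) →L[ℝ] EuclideanSpace ℝ (Fin d) := ∫ y, Φ' x y ∂p₁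
    with hG'_def
  set Gx : EuclideanSpace ℝ (Fin d) := ∫ y, k y x • (y - x) ∂p₁ with hGx_def
  have hFinv : HasFDerivAt (fun z => (∫ y, k y z ∂p₁)⁻¹) ((-(Fv ^ 2)⁻¹) • F') x := by
    exact (hasDerivAt_inv hFvne).comp_hasFDerivAt x hFder
  have hRatio : HasFDerivAt
      (fun z => (∫ y, k y z ∂p₁)⁻¹ • (∫ y, k y z • (y - z) ∂p₁))
      (Fv⁻¹ • G' + ((-(Fv ^ 2)⁻¹) • F').smulRight Gx) x := hFinv.smul hGder
  set U : EuclideanSpace ℝ (Fin d) →L[ℝ] EuclideanSpace ℝ (Fin d) :=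
    (1 - t)⁻¹ • (Fv⁻¹ • G' + ((-(Fv ^ 2)⁻¹) • F').smulRight Gx) with hU_def
  have hUder : HasFDerivAt u U x := by
    rw [hu]
    exact hRatio.const_smul ((1 - t)⁻¹)
  have hfd : fderiv ℝ u x = U := hUder.fderiv
  rw [hfd]
  -- coordinate projections of integrals
  have hproj : ∀ (f : EuclideanSpace ℝ (Fin d) → EuclideanSpace ℝ (Fin d)),
      Integrable f p₁ → ∀ i : Fin d, (∫ y, f y ∂p₁) i = ∫ y, f y i ∂p₁ := by
    intro f hf i
    exact ((EuclideanSpace.proj (𝕜 := ℝ) i).integral_comp_comm hf).symm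
  -- value of Gx in coordinates
  have hGxi : ∀ i : Fin d, Gx i = (∫ y, k y x * y i ∂p₁) - x i * Fv := by
    intro i
    rw [hGx_def, hproj _ hIG i]
    have h1 : (fun y => (k y x • (y - x)) i)
        = fun y => k y x * y i - x i * k y x := by
      funext y
      simp only [PiLp.smul_apply, PiLp.sub_apply, smul_eq_mul]
      ring
    rw [h1, integral_sub (hIkyi i) ((hIk x).const_mul (x i)), integral_const_mul]
  -- value of F' on basis vectors
  have hF'app : ∀ i : Fin d, F' (EuclideanSpace.single i 1)
      = 2 * t / c * (∫ y, k y x * y i ∂p₁) - 2 / c * x i * Fv := by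
    intro i
    rw [hF'_def, ContinuousLinearMap.integral_apply hID]
    have h1 : (fun y => (D y x) (EuclideanSpace.single i 1))
        = fun y => (2 * t / c) * (k y x * y i) + (-(2 / c) * x i) * k y x := by
      funext y
      simp only [hD_def, ContinuousLinearMap.smul_apply, innerSL_apply_apply, smul_eq_mul]
      rw [EuclideanSpace.inner_single_right]
      simp only [PiLp.smul_apply, PiLp.sub_apply, smul_eq_mul, RCLike.star_def, conj_trivial,
        one_mul]
      ring
    rw [h1, integral_add ((hIkyi i).const_mul _) ((hIk x).const_mul _),
      integral_const_mul, integral_const_mul]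
    ring
  -- value of G' on basis vectors, coordinate i
  have hG'app : ∀ i : Fin d, (G' (EuclideanSpace.single i 1)) i
      = (2 * t / c) * (∫ y, k y x * (y i) ^ 2 ∂p₁)
        + ((-(2 / c) * (1 + t) * x i) * (∫ y, k y x * y i ∂p₁)
            + ((2 / c) * (x i) ^ 2 - 1) * Fv) := by
    intro i
    rw [hG'_def, ContinuousLinearMap.integral_apply hIΦ',
      hproj _ (hIΦ'.apply_continuousLinearMap _) i]
    have h1 : (fun y => ((Φ' x y) (EuclideanSpace.single i 1)) i)
        = fun y => (2 * t / c) * (k y x * (y i) ^ 2)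
            + ((-(2 / c) * (1 + t) * x i) * (k y x * y i)
                + ((2 / c) * (x i) ^ 2 - 1) * k y x) := by
      funext y
      simp only [hΦ'_def, hD_def, ContinuousLinearMap.add_apply, ContinuousLinearMap.smul_apply,
        ContinuousLinearMap.sub_apply, ContinuousLinearMap.zero_apply,
        ContinuousLinearMap.id_apply, ContinuousLinearMap.smulRight_apply, innerSL_apply_apply,
        PiLp.add_apply, PiLp.smul_apply, PiLp.sub_apply, PiLp.zero_apply, smul_eq_mul]
      rw [EuclideanSpace.inner_single_right]
      simp only [PiLp.smul_apply, PiLp.sub_apply, smul_eq_mul, RCLike.star_def, conj_trivial,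
        one_mul, EuclideanSpace.single_apply, if_pos rfl, if_true]
      ring
    have hBC : Integrable (fun y => (-(2 / c) * (1 + t) * x i) * (k y x * y i)
        + ((2 / c) * (x i) ^ 2 - 1) * k y x) p₁ :=
      ((hIkyi i).const_mul _).add ((hIk x).const_mul _)
    rw [h1, integral_add ((hIkyi2 i).const_mul _) hBC,
      integral_add ((hIkyi i).const_mul _) ((hIk x).const_mul _),
      integral_const_mul, integral_const_mul, integral_const_mul]
  -- per-coordinate value of the divergence
  have hkey : ∀ i : Fin d, (U (EuclideanSpace.single i 1)) i
      = (1 - t)⁻¹ * (-1 + (2 * t / c) * (Fv⁻¹ * (∫ y, k y x * (y i) ^ 2 ∂p₁)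
          - (Fv⁻¹ * (∫ y, k y x * y i ∂p₁)) ^ 2)) := by
    intro i
    have hUval : (U (EuclideanSpace.single i 1)) i
        = (1 - t)⁻¹ * (Fv⁻¹ * ((G' (EuclideanSpace.single i 1)) i)
            + (-(Fv ^ 2)⁻¹ * (F' (EuclideanSpace.single i 1))) * Gx i) := by
      rw [hU_def]
      simp only [ContinuousLinearMap.smul_apply, ContinuousLinearMap.add_apply,
        ContinuousLinearMap.smulRight_apply, PiLp.smul_apply, PiLp.add_apply, smul_eq_mul,
        ContinuousLinearMap.coe_smul', Pi.smul_apply]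
    rw [hUval, hG'app i, hF'app i, hGxi i]
    have h1t : (1:ℝ) - t ≠ 0 := by linarith
    have hcne : c ≠ 0 := ne_of_gt hc
    field_simp [h1t, hcne, hFvne]
    ring
  rw [Finset.sum_congr rfl (fun i _ => hkey i)]
  -- rewrite the right-hand side in coordinates
  have hS : ∫ y, ‖y‖ ^ 2 * k y x ∂p₁ = ∑ i : Fin d, ∫ y, k y x * (y i) ^ 2 ∂p₁ := by
    rw [← integral_finset_sum _ (fun i _ => hIkyi2 i)]
    congr 1
    funext y
    rw [euclid_norm_sq_eq_sum, Finset.sum_mul]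
    exact Finset.sum_congr rfl fun i _ => mul_comm _ _
  have hnormterm : ‖Fv⁻¹ • (∫ y, k y x • y ∂p₁)‖ ^ 2
      = ∑ i : Fin d, (Fv⁻¹ * (∫ y, k y x * y i ∂p₁)) ^ 2 := by
    rw [euclid_norm_sq_eq_sum]
    refine Finset.sum_congr rfl fun i _ => ?_
    have h2 : (∫ y, k y x • y ∂p₁) i = ∫ y, k y x * y i ∂p₁ :=
      (hproj _ hIky i).trans (integral_congr_ae (Filter.Eventually.of_forall fun y => rfl))
    have h3 : (Fv⁻¹ • (∫ y, k y x • y ∂p₁)) i = Fv⁻¹ * (∫ y, k y x • y ∂p₁) i := rfl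
    rw [h3, h2]
  rw [hS, hnormterm]
  have expand : ∀ i : Fin d, (1 - t)⁻¹ * (-1 + (2 * t / c) * (Fv⁻¹ * (∫ y, k y x * (y i) ^ 2 ∂p₁)
          - (Fv⁻¹ * (∫ y, k y x * y i ∂p₁)) ^ 2))
      = (-(1 - t)⁻¹) + (((1 - t)⁻¹ * (2 * t / c) * Fv⁻¹) * (∫ y, k y x * (y i) ^ 2 ∂p₁)
          - ((1 - t)⁻¹ * (2 * t / c)) * (Fv⁻¹ * (∫ y, k y x * y i ∂p₁)) ^ 2) := by
    intro i; ring
  rw [Finset.sum_congr rfl (fun i _ => expand i)]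
  rw [Finset.sum_add_distrib, Finset.sum_sub_distrib, Finset.sum_const, ← Finset.mul_sum,
    ← Finset.mul_sum, Finset.card_univ, Fintype.card_fin, nsmul_eq_mul]
  ring
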